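/- arXiv:1906.04710 — 2 statements merged into one kernel-verified Lean document; each statement's English description precedes it below -/
import Mathlib

section
/- At any point (0,y) with y>0, the acceleration of the Steiner drop satisfies f(0,y)=0 and ÿ = -2 sin α (1 - q₀/q(α)), where α ∈ (0,π/2) is the contact angle determined by y = √(tan α)/3 and q(α) = 2 sin²α √(tan α)/(4 + sec α). In particular, (0, √(tan α₀)/3) is an equilibrium of the system with parameter q₀ = q(α₀). -/
open Real

noncomputable def aSide (x y : ℝ) : ℝ := Real.sqrt ((1/(3*y) - 3*x)^2 + 9*y^2)

noncomputable def bSide (x y : ℝ) : ℝ := Real.sqrt ((3*x + 1/(3*y))^2 + 9*y^2)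

noncomputable def fF (q x y : ℝ) : ℝ :=
  (1 / aSide x y) * (1/(3*y) - 3*x) - (1 / bSide x y) * (1/(3*y) + 3*x)

noncomputable def hF (q x y : ℝ) : ℝ :=
  -3*y * (1 / aSide x y + 1 / bSide x y)
    + (q/(3*y)) * (2*(aSide x y + bSide x y)/(3*y) + aSide x y * bSide x y)

noncomputable def qFun (α : ℝ) : ℝ :=
  2 * Real.sin α ^ 2 * Real.sqrt (Real.tan α) / (4 + 1 / Real.cos α)

/-! On the axis the two sides agree, so the horizontal force cancels. Writing `u = 3y = √(tan α)`,
the relation `cos² α (1 + tan² α) = 1` gives `a(0, y)² = 1/u² + u² = 1/(u cos α)²`, and then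
`u² cos α = sin α` reduces `h(0, y)` to `-2 sin α + q₀ (4 + sec α)/(u sin α)`. -/

lemma bSide_zero (y : ℝ) : bSide 0 y = aSide 0 y := by
  simp [aSide, bSide]

lemma fF_zero (q y : ℝ) : fF q 0 y = 0 := by
  simp [fF, bSide_zero]

lemma hF_zero (q y : ℝ) :
    hF q 0 y = -6 * y / aSide 0 y + q / (3 * y) * (4 * aSide 0 y / (3 * y) + aSide 0 y ^ 2) := by
  rw [hF, bSide_zero]
  ring

lemma sqrt_tan_pos {α : ℝ} (hs : 0 < sin α) (hc : 0 < cos α) : 0 < √(tan α) :=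
  sqrt_pos.2 (tan_eq_sin_div_cos α ▸ div_pos hs hc)

lemma sq_sqrt_tan_mul_cos {α : ℝ} (hs : 0 < sin α) (hc : 0 < cos α) :
    √(tan α) ^ 2 * cos α = sin α := by
  rw [sq_sqrt (tan_eq_sin_div_cos α ▸ div_pos hs hc).le, tan_eq_sin_div_cos,
    div_mul_cancel₀ _ hc.ne']

lemma aSide_zero_sqrt_tan {α : ℝ} (hs : 0 < sin α) (hc : 0 < cos α) :
    aSide 0 (√(tan α) / 3) = 1 / (cos α * √(tan α)) := by
  have hu := sqrt_tan_pos hs hc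
  have hsc := sq_sqrt_tan_mul_cos hs hc
  rw [aSide, ← sqrt_sq (by positivity : 0 ≤ 1 / (cos α * √(tan α)))]
  congr 1
  field_simp
  linear_combination 9 * (√(tan α) ^ 2 * cos α + sin α) * hsc + 9 * sin_sq_add_cos_sq α

lemma hF_zero_sqrt_tan (q : ℝ) {α : ℝ} (hs : 0 < sin α) (hc : 0 < cos α) :
    hF q 0 (√(tan α) / 3) = -2 * sin α + q * (4 + 1 / cos α) / (sin α * √(tan α)) := by
  have hu := sqrt_tan_pos hs hc
  rw [hF_zero, aSide_zero_sqrt_tan hs hc, ← sq_sqrt_tan_mul_cos hs hc]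
  field_simp
  ring

lemma qFun_pos {α : ℝ} (hs : 0 < sin α) (hc : 0 < cos α) : 0 < qFun α := by
  have := sqrt_tan_pos hs hc
  unfold qFun
  positivity

lemma two_sin_mul_div_qFun (q : ℝ) {α : ℝ} (hs : 0 < sin α) (hc : 0 < cos α) :
    2 * sin α * (q / qFun α) = q * (4 + 1 / cos α) / (sin α * √(tan α)) := by
  have := sqrt_tan_pos hs hc
  unfold qFun
  field_simp

lemma hF_zero_sqrt_tan_eq_qFun (q : ℝ) {α : ℝ} (hs : 0 < sin α) (hc : 0 < cos α) :
    hF q 0 (√(tan α) / 3) = -2 * sin α * (1 - q / qFun α) := by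
  rw [hF_zero_sqrt_tan q hs hc, ← two_sin_mul_div_qFun q hs hc]
  ring

lemma sin_pos_and_cos_pos_of_mem_Ioo {α : ℝ} (hα : α ∈ Set.Ioo 0 (π / 2)) :
    0 < sin α ∧ 0 < cos α :=
  ⟨sin_pos_of_pos_of_lt_pi hα.1 (hα.2.trans (by linarith [pi_pos])),
    cos_pos_of_mem_Ioo ⟨by linarith [hα.1, pi_pos], hα.2⟩⟩

theorem vertical_force_on_axis_general
    (q₀ α : ℝ) (hα : α ∈ Set.Ioo 0 (π/2)) :
    fF q₀ 0 (Real.sqrt (Real.tan α) / 3) = 0 ∧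
    hF q₀ 0 (Real.sqrt (Real.tan α) / 3)
      = -2 * Real.sin α * (1 - q₀ / qFun α) ∧
    (∀ α₀ ∈ Set.Ioo 0 (π/2), q₀ = qFun α₀ →
      hF q₀ 0 (Real.sqrt (Real.tan α₀) / 3) = 0) := by
  obtain ⟨hs, hc⟩ := sin_pos_and_cos_pos_of_mem_Ioo hα
  refine ⟨fF_zero q₀ _, hF_zero_sqrt_tan_eq_qFun q₀ hs hc, fun α₀ hα₀ hq => ?_⟩
  obtain ⟨hs₀, hc₀⟩ := sin_pos_and_cos_pos_of_mem_Ioo hα₀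
  rw [hF_zero_sqrt_tan_eq_qFun q₀ hs₀ hc₀, hq, div_self (qFun_pos hs₀ hc₀).ne', sub_self,
    mul_zero]

theorem vertical_force_on_axis
    (q₀ α : ℝ) (hq₀ : 0 < q₀) (hα : α ∈ Set.Ioo 0 (π/2)) :
    fF q₀ 0 (Real.sqrt (Real.tan α) / 3) = 0 ∧
    hF q₀ 0 (Real.sqrt (Real.tan α) / 3)
      = -2 * Real.sin α * (1 - q₀ / qFun α) ∧
    (∀ α₀ ∈ Set.Ioo 0 (π/2), q₀ = qFun α₀ →
      hF q₀ 0 (Real.sqrt (Real.tan α₀) / 3) = 0) :=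
  vertical_force_on_axis_general q₀ α hα
end

section
/- At the equilibrium y₀ = √(tan α₀)/3 of the Steiner drop system with q = q(α₀), the partial derivative f_x(0,y₀) equals -6 √(sin⁵α₀ cos α₀), which is strictly negative for all α₀ ∈ (0, π/2). -/
open Real

/-! With `c = 1/(3y)` and `g v = v / √(v² + 9y²)` one has `fF q x y = g (c - 3x) - g (c + 3x)`,
so `∂ₓ fF (0, y) = -6 g'(c) = -6 · 9y² / (c² + 9y²)^{3/2} = -1458 y⁵ / (81y⁴ + 1)^{3/2}`.
At `y = √(tan α)/3` we get `81y⁴ + 1 = 1 + tan² α = cos⁻² α`, and the value becomes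
`-6 tan^{5/2} α cos³ α = -6 √(sin⁵ α cos α)`. -/

theorem hasDerivAt_div_sqrt_sq_add {d : ℝ} (hd : 0 < d) (u : ℝ) :
    HasDerivAt (fun v => v / √(v ^ 2 + d)) (d / ((u ^ 2 + d) * √(u ^ 2 + d))) u := by
  have hpos : 0 < u ^ 2 + d := by positivity
  have hsqrt : HasDerivAt (fun v => √(v ^ 2 + d)) (u / √(u ^ 2 + d)) u := by
    convert ((hasDerivAt_pow 2 u).add_const d).sqrt hpos.ne' using 1
    field_simp
    ring
  refine ((hasDerivAt_id u).div hsqrt (Real.sqrt_pos.mpr hpos).ne').congr_deriv ?_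
  have hsq := Real.sq_sqrt hpos.le
  field_simp
  rw [hsq, id]
  ring

theorem hasDerivAt_fF_zero (q : ℝ) {y : ℝ} (hy : 0 < y) :
    HasDerivAt (fun x => fF q x y)
      (-1458 * y ^ 5 / ((81 * y ^ 4 + 1) * √(81 * y ^ 4 + 1))) 0 := by
  set c := 1 / (3 * y)
  set g := fun v : ℝ => v / √(v ^ 2 + 9 * y ^ 2)
  have hfF : (fun x => fF q x y) = fun x => g (c - 3 * x) - g (c + 3 * x) := by
    funext x
    simp only [fF, aSide, bSide, g, c]
    ring_nf
  have hg := hasDerivAt_div_sqrt_sq_add (by positivity : 0 < 9 * y ^ 2) c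
  have hminus : HasDerivAt (fun x => g (c - 3 * x)) _ 0 :=
    (by simpa using hg : HasDerivAt g _ (c - 3 * 0)).comp 0
      (((hasDerivAt_id 0).const_mul 3).const_sub c)
  have hplus : HasDerivAt (fun x => g (c + 3 * x)) _ 0 :=
    (by simpa using hg : HasDerivAt g _ (c + 3 * 0)).comp 0
      (((hasDerivAt_id 0).const_mul 3).const_add c)
  rw [hfF]
  refine (hminus.sub hplus).congr_deriv ?_
  have hsum : c ^ 2 + 9 * y ^ 2 = (81 * y ^ 4 + 1) / (3 * y) ^ 2 := by
    simp only [c]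
    field_simp
    ring
  rw [hsum, Real.sqrt_div' _ (by positivity), Real.sqrt_sq (by positivity)]
  field_simp
  ring

theorem sqrt_sin_pow_five_mul_cos {α : ℝ} (hsin : 0 ≤ sin α) (hcos : 0 < cos α) :
    √(sin α ^ 5 * cos α) = √(tan α) ^ 5 * cos α ^ 3 := by
  have htan : 0 ≤ tan α := by rw [tan_eq_sin_div_cos]; positivity
  rw [Real.sqrt_eq_iff_eq_sq (by positivity) (by positivity), mul_pow, ← pow_mul, mul_comm 5,
    pow_mul, Real.sq_sqrt htan, tan_eq_sin_div_cos]
  field_simp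

theorem fx_value_at_sqrt_tan_div_three {α : ℝ} (hsin : 0 ≤ sin α) (hcos : 0 < cos α) :
    -1458 * (√(tan α) / 3) ^ 5 / ((81 * (√(tan α) / 3) ^ 4 + 1) * √(81 * (√(tan α) / 3) ^ 4 + 1))
      = -6 * √(sin α ^ 5 * cos α) := by
  have htan : 0 ≤ tan α := by rw [tan_eq_sin_div_cos]; positivity
  have h4 : 81 * (√(tan α) / 3) ^ 4 + 1 = 1 + tan α ^ 2 := by
    rw [div_pow, show √(tan α) ^ 4 = (√(tan α) ^ 2) ^ 2 by ring, Real.sq_sqrt htan]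
    ring
  have hsq : √(1 + tan α ^ 2) ^ 2 = 1 + tan α ^ 2 := Real.sq_sqrt (by positivity)
  rw [h4, sqrt_sin_pow_five_mul_cos hsin hcos, ← inv_sqrt_one_add_tan_sq hcos]
  field_simp
  rw [hsq]
  ring

theorem fx_at_equilibrium (α₀ : ℝ) (hα₀ : α₀ ∈ Set.Ioo 0 (π/2)) :
    HasDerivAt (fun x' => fF (qFun α₀) x' (Real.sqrt (Real.tan α₀) / 3))
      (-6 * Real.sqrt (Real.sin α₀ ^ 5 * Real.cos α₀)) 0 ∧
    -6 * Real.sqrt (Real.sin α₀ ^ 5 * Real.cos α₀) < 0 := by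
  obtain ⟨hpos, hlt⟩ := hα₀
  have hsin : 0 < sin α₀ := sin_pos_of_pos_of_lt_pi hpos (by linarith [pi_pos])
  have hcos : 0 < cos α₀ := cos_pos_of_mem_Ioo ⟨by linarith [pi_pos], hlt⟩
  have hy : 0 < √(tan α₀) / 3 := by
    have := tan_pos_of_pos_of_lt_pi_div_two hpos hlt
    positivity
  refine ⟨?_, ?_⟩
  · rw [← fx_value_at_sqrt_tan_div_three hsin.le hcos]
    exact hasDerivAt_fF_zero _ hy
  · have : 0 < √(sin α₀ ^ 5 * cos α₀) := Real.sqrt_pos.mpr (by positivity)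
    linarith
end
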